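/- Let A, B be bounded linear operators on a complex Hilbert space H and r ≥ 1. Then ω^{2r}(B*A) ≤ (1/2)ω^r(|B|²|A|²) + (1/4)‖|A|^{4r} + |B|^{4r}‖, where ω is the numerical radius. -/

import Mathlib

set_option synthInstance.maxHeartbeats 1000000
set_option maxHeartbeats 1000000

open scoped InnerProductSpace

noncomputable def opAbs {H : Type*} [NormedAddCommGroup H] [InnerProductSpace ℂ H]
    [CompleteSpace H] (T : H →L[ℂ] H) : H →L[ℂ] H :=
  CFC.sqrt ((ContinuousLinearMap.adjoint T) * T)

noncomputable def numRadius {H : Type*} [NormedAddCommGroup H] [InnerProductSpace ℂ H]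
    (T : H →L[ℂ] H) : ℝ :=
  ⨆ x : {y : H // ‖y‖ = 1}, ‖⟪T (x : H), (x : H)⟫_ℂ‖

/-!
Fix a unit vector `x` and put `a = A*A`, `b = B*B`. Cauchy–Schwarz gives
`|⟪B*A x, x⟫|² ≤ ‖A x‖² ‖B x‖² = ⟪a x, x⟫ ⟪x, b x⟫`, and Buzano's inequality
`|⟪u, e⟫ ⟪e, v⟫| ≤ (‖u‖ ‖v‖ + |⟪u, v⟫|) / 2` bounds this by `(‖a x‖ ‖b x‖ + |⟪b a x, x⟫|) / 2`.
Raising to the power `r` and using convexity of `t ↦ t ^ r` leaves `(‖a x‖ ‖b x‖) ^ r`, which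
AM–GM bounds by `(‖a x‖ ^ (2r) + ‖b x‖ ^ (2r)) / 2`. Since `‖a x‖ ^ 2 = ⟪a² x, x⟫`, the
Hölder–McCarthy inequality `⟪T x, x⟫ ^ r ≤ ⟪T ^ r x, x⟫` (`T ≥ 0`, `r ≥ 1`) gives
`‖a x‖ ^ (2r) ≤ ⟪a ^ (2r) x, x⟫ = ⟪|A| ^ (4r) x, x⟫`. Taking the supremum over `x` finishes.
-/

namespace Real

lemma rpow_add_mul_sub_le_rpow {r s t : ℝ} (hr : 1 ≤ r) (hs : 0 ≤ s) (ht : 0 ≤ t) :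
    s ^ r + r * s ^ (r - 1) * (t - s) ≤ t ^ r := by
  rcases hs.eq_or_lt with rfl | hs
  · rcases hr.eq_or_lt with rfl | hr
    · simp
    · simp [zero_rpow (by positivity : r ≠ 0), zero_rpow (by linarith : r - 1 ≠ 0),
        rpow_nonneg ht]
  · have bernoulli := one_add_mul_self_le_rpow_one_add
      (s := t / s - 1) (by linarith [div_nonneg ht hs.le]) hr
    rw [add_sub_cancel, div_rpow ht hs.le] at bernoulli
    calc s ^ r + r * s ^ (r - 1) * (t - s)
        = s ^ r * (1 + r * (t / s - 1)) := by
          rw [rpow_sub hs, rpow_one]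
          field_simp
      _ ≤ s ^ r * (t ^ r / s ^ r) := by gcongr
      _ = t ^ r := by field_simp

lemma add_div_two_rpow_le {u v r : ℝ} (hu : 0 ≤ u) (hv : 0 ≤ v) (hr : 1 ≤ r) :
    ((u + v) / 2) ^ r ≤ (u ^ r + v ^ r) / 2 := by
  have h := (convexOn_rpow hr).2 (Set.mem_Ici.mpr hu) (Set.mem_Ici.mpr hv)
    (by norm_num : (0 : ℝ) ≤ 1 / 2) (by norm_num : (0 : ℝ) ≤ 1 / 2) (by norm_num)
  simp only [smul_eq_mul] at h
  rw [show (u + v) / 2 = 1 / 2 * u + 1 / 2 * v by ring]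
  linarith

lemma rpow_two_mul {x : ℝ} (hx : 0 ≤ x) (r : ℝ) : x ^ (2 * r) = (x ^ 2) ^ r := by
  rw [rpow_mul hx, rpow_two]

lemma rpow_mul_rpow_le_add_rpow_two_mul_div_two {p q r : ℝ} (hp : 0 ≤ p) (hq : 0 ≤ q) :
    p ^ r * q ^ r ≤ (p ^ (2 * r) + q ^ (2 * r)) / 2 := by
  rw [mul_comm 2 r, rpow_mul hp, rpow_mul hq, rpow_two, rpow_two]
  nlinarith [sq_nonneg (p ^ r - q ^ r)]

lemma rpow_two_mul_le_of_sq_le {f u m r : ℝ} (hf : 0 ≤ f) (hu : 0 ≤ u) (hm : 0 ≤ m)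
    (hr : 1 ≤ r) (h : f ^ 2 ≤ (u + m) / 2) : f ^ (2 * r) ≤ (u ^ r + m ^ r) / 2 :=
  calc f ^ (2 * r) = (f ^ 2) ^ r := rpow_two_mul hf r
    _ ≤ ((u + m) / 2) ^ r := by gcongr
    _ ≤ (u ^ r + m ^ r) / 2 := add_div_two_rpow_le hu hm hr

end Real

section Buzano

variable {𝕜 E : Type*} [RCLike 𝕜] [NormedAddCommGroup E] [InnerProductSpace 𝕜 E]

-- `(2 ⟪e, v⟫) • e - v` is the reflection of `v` in the line `𝕜 ∙ e`.
lemma norm_two_inner_smul_sub {e : E} (he : ‖e‖ = 1) (v : E) :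
    ‖(2 * ⟪e, v⟫_𝕜) • e - v‖ = ‖v‖ := by
  have hsq : ‖(2 * ⟪e, v⟫_𝕜) • e - v‖ ^ 2 = ‖v‖ ^ 2 := by
    rw [@norm_sub_sq 𝕜, norm_smul, he, inner_smul_left, mul_one, map_mul (starRingEnd 𝕜),
      mul_assoc, RCLike.conj_mul, map_ofNat, ← RCLike.ofReal_pow, ← RCLike.ofReal_ofNat,
      ← RCLike.ofReal_mul, RCLike.ofReal_re, norm_mul, RCLike.norm_ofReal, abs_two]
    ring
  exact (sq_eq_sq₀ (norm_nonneg _) (norm_nonneg _)).1 hsq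

lemma norm_inner_mul_inner_le {e : E} (he : ‖e‖ = 1) (u v : E) :
    ‖⟪u, e⟫_𝕜 * ⟪e, v⟫_𝕜‖ ≤ (‖u‖ * ‖v‖ + ‖⟪u, v⟫_𝕜‖) / 2 := by
  set w := (2 * ⟪e, v⟫_𝕜) • e - v
  have hw : 2 * (⟪u, e⟫_𝕜 * ⟪e, v⟫_𝕜) = ⟪u, w⟫_𝕜 + ⟪u, v⟫_𝕜 := by
    rw [inner_sub_right, inner_smul_right]
    ring
  have := calc 2 * ‖⟪u, e⟫_𝕜 * ⟪e, v⟫_𝕜‖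
      = ‖⟪u, w⟫_𝕜 + ⟪u, v⟫_𝕜‖ := by rw [← hw, norm_mul (2 : 𝕜), RCLike.norm_two]
    _ ≤ ‖u‖ * ‖w‖ + ‖⟪u, v⟫_𝕜‖ := (norm_add_le _ _).trans (by gcongr; exact norm_inner_le_norm _ _)
    _ = ‖u‖ * ‖v‖ + ‖⟪u, v⟫_𝕜‖ := by rw [norm_two_inner_smul_sub he]
  linarith

end Buzano

section Operators

open ContinuousLinearMap

variable {𝕜 E : Type*} [RCLike 𝕜] [NormedAddCommGroup E] [InnerProductSpace 𝕜 E]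

lemma ContinuousLinearMap.norm_inner_apply_le_opNorm (T : E →L[𝕜] E) {x : E} (hx : ‖x‖ = 1) :
    ‖⟪T x, x⟫_𝕜‖ ≤ ‖T‖ :=
  calc ‖⟪T x, x⟫_𝕜‖ ≤ ‖T x‖ * ‖x‖ := norm_inner_le_norm _ _
    _ ≤ ‖T‖ * ‖x‖ * ‖x‖ := by gcongr; exact T.le_opNorm x
    _ = ‖T‖ := by rw [hx, mul_one, mul_one]

lemma ContinuousLinearMap.re_inner_le_re_inner_of_le {S T : E →L[𝕜] E} (h : S ≤ T) (x : E) :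
    RCLike.re ⟪S x, x⟫_𝕜 ≤ RCLike.re ⟪T x, x⟫_𝕜 := by
  have := ((le_def S T).1 h).re_inner_nonneg_left x
  rwa [sub_apply, inner_sub_left, map_sub, sub_nonneg] at this

lemma norm_inner_adjoint_mul_apply_sq_le [CompleteSpace E] (A B : E →L[𝕜] E) {x : E}
    (hx : ‖x‖ = 1) :
    ‖⟪(adjoint B * A) x, x⟫_𝕜‖ ^ 2 ≤
      (‖(adjoint A * A) x‖ * ‖(adjoint B * B) x‖ +
        ‖⟪(adjoint B * B * (adjoint A * A)) x, x⟫_𝕜‖) / 2 := by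
  have hBB : IsSelfAdjoint (adjoint B * B) := IsSelfAdjoint.star_mul_self B
  calc ‖⟪(adjoint B * A) x, x⟫_𝕜‖ ^ 2 = ‖⟪A x, B x⟫_𝕜‖ ^ 2 := by
        rw [mul_apply_eq_comp, adjoint_inner_left]
    _ ≤ (‖A x‖ * ‖B x‖) ^ 2 := by gcongr; exact norm_inner_le_norm _ _
    _ = ‖⟪(adjoint A * A) x, x⟫_𝕜 * ⟪x, (adjoint B * B) x⟫_𝕜‖ := by
        rw [mul_apply_eq_comp, mul_apply_eq_comp, adjoint_inner_left, adjoint_inner_right,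
          inner_self_eq_norm_sq_to_K, inner_self_eq_norm_sq_to_K]
        simp [mul_pow]
    _ ≤ _ := by
        rw [mul_apply_eq_comp (adjoint B * B), ← hBB.adjoint_eq, adjoint_inner_left, hBB.adjoint_eq]
        exact norm_inner_mul_inner_le hx _ _

end Operators

section NumRadius

variable {H : Type*} [NormedAddCommGroup H] [InnerProductSpace ℂ H]

lemma norm_inner_le_numRadius (T : H →L[ℂ] H) {x : H} (hx : ‖x‖ = 1) :
    ‖⟪T x, x⟫_ℂ‖ ≤ numRadius T := by
  refine le_ciSup_of_le ⟨‖T‖, ?_⟩ (⟨x, hx⟩ : {y : H // ‖y‖ = 1}) le_rfl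
  rintro _ ⟨y, rfl⟩
  exact T.norm_inner_apply_le_opNorm y.2

lemma numRadius_nonneg (T : H →L[ℂ] H) : 0 ≤ numRadius T :=
  Real.iSup_nonneg fun _ => norm_nonneg _

lemma numRadius_rpow_le {T : H →L[ℂ] H} {p C : ℝ} (hp : 0 < p) (hC : 0 ≤ C)
    (h : ∀ x : H, ‖x‖ = 1 → ‖⟪T x, x⟫_ℂ‖ ^ p ≤ C) : numRadius T ^ p ≤ C := by
  have hbound : numRadius T ≤ C ^ p⁻¹ :=
    Real.iSup_le (fun x => (Real.le_rpow_inv_iff_of_pos (norm_nonneg _) hC hp).2 (h x x.2))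
      (by positivity)
  exact (Real.le_rpow_inv_iff_of_pos (numRadius_nonneg T) hC hp).1 hbound

end NumRadius

section ComplexOperators

open ContinuousLinearMap

variable {H : Type*} [NormedAddCommGroup H] [InnerProductSpace ℂ H]

lemma ContinuousLinearMap.re_inner_algebraMap_add_smul_apply (c d : ℝ) (T : H →L[ℂ] H)
    {x : H} (hx : ‖x‖ = 1) :
    RCLike.re ⟪(algebraMap ℝ (H →L[ℂ] H) c + d • T) x, x⟫_ℂ = c + d * RCLike.re ⟪T x, x⟫_ℂ := by
  simp [Algebra.algebraMap_eq_smul_one, ← Complex.coe_smul, inner_self_eq_norm_sq_to_K, hx,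
    mul_comm]

variable [CompleteSpace H]

-- Hölder–McCarthy: the tangent line of `t ↦ t ^ r` at `s = re ⟪T x, x⟫` lies below `t ^ r` on
-- the spectrum of `T`, and evaluating this operator inequality at `x` makes the tangent exact.
lemma rpow_re_inner_le_re_inner_rpow {T : H →L[ℂ] H} (hT : 0 ≤ T) {r : ℝ} (hr : 1 ≤ r)
    {x : H} (hx : ‖x‖ = 1) : RCLike.re ⟪T x, x⟫_ℂ ^ r ≤ RCLike.re ⟪(T ^ r) x, x⟫_ℂ := by
  set s := RCLike.re ⟪T x, x⟫_ℂ
  have hs : 0 ≤ s := ((nonneg_iff_isPositive T).1 hT).re_inner_nonneg_left x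
  have htangent :
      algebraMap ℝ _ (s ^ r - r * s ^ (r - 1) * s) + (r * s ^ (r - 1)) • T ≤ T ^ r := by
    rw [CFC.rpow_eq_cfc_real hT, ← cfc_const_mul_id (R := ℝ) _ T, ← cfc_const_add _ _ T]
    refine cfc_mono (fun t ht => ?_)
      (hg := (Real.continuous_rpow_const (by linarith)).continuousOn)
    nlinarith [Real.rpow_add_mul_sub_le_rpow hr hs (spectrum_nonneg_of_nonneg hT ht)]
  have := re_inner_le_re_inner_of_le htangent x
  rw [re_inner_algebraMap_add_smul_apply _ _ _ hx] at this
  linarith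

lemma norm_apply_rpow_two_mul_le {a : H →L[ℂ] H} (ha : 0 ≤ a) {r : ℝ} (hr : 1 ≤ r)
    {x : H} (hx : ‖x‖ = 1) : ‖a x‖ ^ (2 * r) ≤ RCLike.re ⟪(a ^ (2 * r)) x, x⟫_ℂ := by
  have hsq : ‖a x‖ ^ 2 = RCLike.re ⟪(a ^ (2 : ℝ)) x, x⟫_ℂ := by
    rw [show (2 : ℝ) = (2 : ℕ) by norm_num, CFC.rpow_natCast a 2 ha, sq a, mul_apply_eq_comp,
      ← (IsSelfAdjoint.of_nonneg ha).adjoint_eq, adjoint_inner_left,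
      (IsSelfAdjoint.of_nonneg ha).adjoint_eq, inner_self_eq_norm_sq]
  calc ‖a x‖ ^ (2 * r) = RCLike.re ⟪(a ^ (2 : ℝ)) x, x⟫_ℂ ^ r := by
        rw [Real.rpow_two_mul (norm_nonneg _), hsq]
    _ ≤ RCLike.re ⟪((a ^ (2 : ℝ)) ^ r) x, x⟫_ℂ :=
        rpow_re_inner_le_re_inner_rpow CFC.rpow_nonneg hr hx
    _ = RCLike.re ⟪(a ^ (2 * r)) x, x⟫_ℂ := by
        rw [CFC.rpow_rpow_of_exponent_nonneg a 2 r zero_le_two (by linarith) ha]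

lemma opAbs_rpow_two_mul (A : H →L[ℂ] H) {s : ℝ} (hs : 0 ≤ s) :
    opAbs A ^ (2 * s) = (adjoint A * A) ^ s := by
  rw [opAbs, CFC.sqrt_eq_rpow, CFC.rpow_rpow_of_exponent_nonneg (adjoint A * A) _ _
    (by norm_num) (by positivity) (star_mul_self_nonneg A), ← mul_assoc,
    one_div_mul_cancel two_ne_zero, one_mul]

lemma norm_inner_adjoint_mul_apply_rpow_le (A B : H →L[ℂ] H) {r : ℝ} (hr : 1 ≤ r) {x : H}
    (hx : ‖x‖ = 1) :
    ‖⟪(adjoint B * A) x, x⟫_ℂ‖ ^ (2 * r) ≤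
      1 / 2 * ‖⟪(adjoint B * B * (adjoint A * A)) x, x⟫_ℂ‖ ^ r +
        1 / 4 * RCLike.re ⟪((adjoint A * A) ^ (2 * r) + (adjoint B * B) ^ (2 * r)) x, x⟫_ℂ := by
  set a := adjoint A * A
  set b := adjoint B * B
  have hab : (‖a x‖ * ‖b x‖) ^ r ≤
      (RCLike.re ⟪(a ^ (2 * r)) x, x⟫_ℂ + RCLike.re ⟪(b ^ (2 * r)) x, x⟫_ℂ) / 2 := by
    rw [Real.mul_rpow (norm_nonneg _) (norm_nonneg _)]
    refine (Real.rpow_mul_rpow_le_add_rpow_two_mul_div_two (norm_nonneg _) (norm_nonneg _)).trans ?_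
    gcongr
    · exact norm_apply_rpow_two_mul_le (star_mul_self_nonneg A) hr hx
    · exact norm_apply_rpow_two_mul_le (star_mul_self_nonneg B) hr hx
  have := Real.rpow_two_mul_le_of_sq_le (norm_nonneg _) (by positivity) (norm_nonneg _) hr
    (norm_inner_adjoint_mul_apply_sq_le A B hx)
  rw [add_apply, inner_add_left, map_add]
  linarith

end ComplexOperators

theorem stmt_14 {H : Type*} [NormedAddCommGroup H] [InnerProductSpace ℂ H] [CompleteSpace H]
    (A B : H →L[ℂ] H) (r : ℝ) (hr : 1 ≤ r) :
    numRadius ((ContinuousLinearMap.adjoint B) * A) ^ (2 * r) ≤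
      (1 / 2) * numRadius (((ContinuousLinearMap.adjoint B) * B) *
          ((ContinuousLinearMap.adjoint A) * A)) ^ r +
        (1 / 4) * ‖CFC.rpow (opAbs A) (4 * r) + CFC.rpow (opAbs B) (4 * r)‖ := by
  have hfour : 4 * r = 2 * (2 * r) := by ring
  rw [CFC.rpow_eq_pow, CFC.rpow_eq_pow, hfour, opAbs_rpow_two_mul A (by positivity),
    opAbs_rpow_two_mul B (by positivity)]
  have hC := Real.rpow_nonneg (numRadius_nonneg
    (ContinuousLinearMap.adjoint B * B * (ContinuousLinearMap.adjoint A * A))) r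
  refine numRadius_rpow_le (by positivity) (by positivity) fun x hx => ?_
  refine (norm_inner_adjoint_mul_apply_rpow_le A B hr hx).trans ?_
  gcongr
  · exact norm_inner_le_numRadius _ hx
  · exact (RCLike.re_le_norm _).trans (ContinuousLinearMap.norm_inner_apply_le_opNorm _ hx)
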